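/- arXiv:math/0605503 — 2 statements merged into one kernel-verified Lean document; each statement's English description precedes it below -/
import Mathlib

section
/- For any family F of arcs on a circle, the chromatic number of the circular arc graph of F satisfies χ(F) ≤ r_sup + r_inf. -/
open SimpleGraph
open scoped Classical

instance : Fact ((0:ℝ) < 1) := ⟨one_pos⟩

/-- An arc on the unit circle `AddCircle 1`, described by its left endpoint (the first
endpoint met anticlockwise from an interior point) and its (clockwise) length.
Since `0 < len < 1`, an arc is neither a single point nor the whole circle. -/
structure CArc where
  left : AddCircle (1:ℝ)
  len : ℝ
  len_pos : 0 < len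
  len_lt_one : len < 1

namespace CArc

/-- The set of points of the arc: going clockwise from the left endpoint for `len`. -/
def pts (a : CArc) : Set (AddCircle (1:ℝ)) :=
  {q | ∃ t : ℝ, 0 ≤ t ∧ t ≤ a.len ∧ q = a.left + (t : AddCircle (1:ℝ))}

/-- The right endpoint of an arc. -/
noncomputable def right (a : CArc) : AddCircle (1:ℝ) := a.left + ((a.len : ℝ) : AddCircle (1:ℝ))

end CArc

/-- A family of arcs on the circle: a finite set of arcs with all endpoints distinct. -/
structure ArcFamily where
  arcs : Finset CArc
  endpoints_distinct :
    ∀ a ∈ arcs, ∀ b ∈ arcs, a ≠ b →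
      a.left ≠ b.left ∧ a.left ≠ b.right ∧ a.right ≠ b.left ∧ a.right ≠ b.right

namespace ArcFamily

/-- A family of arcs is proper if no arc is properly contained in another. -/
def IsProper (F : ArcFamily) : Prop :=
  ∀ a ∈ F.arcs, ∀ b ∈ F.arcs, ¬ a.pts ⊂ b.pts

/-- The overlap set of a point `p`: all arcs of the family containing `p`. -/
noncomputable def overlap (F : ArcFamily) (p : AddCircle (1:ℝ)) : Finset CArc :=
  F.arcs.filter fun a => p ∈ a.pts

/-- `r_sup`: the maximum cardinality of an overlap set. -/
noncomputable def rsup (F : ArcFamily) : ℕ :=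
  sSup {n | ∃ p, (F.overlap p).card = n}

/-- `r_inf`: the minimum cardinality of an overlap set. -/
noncomputable def rinf (F : ArcFamily) : ℕ :=
  sInf {n | ∃ p, (F.overlap p).card = n}

/-- The circular arc graph of a family: vertices are the arcs, two distinct arcs are
adjacent iff they intersect. -/
def graph (F : ArcFamily) : SimpleGraph {a : CArc // a ∈ F.arcs} where
  Adj u v := u ≠ v ∧ (u.1.pts ∩ v.1.pts).Nonempty
  symm := ⟨by rintro u v ⟨h, q, h1, h2⟩; exact ⟨h.symm, q, h2, h1⟩⟩
  loopless := ⟨by rintro u ⟨h, -⟩; exact h rfl⟩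

/-- `F.CwAdj u v` : the arc `v` is clockwise adjacent to the arc `u`,
i.e. `v ≠ u` and `v ∈ O(r(u))`. -/
def CwAdj (F : ArcFamily) (u v : CArc) : Prop :=
  v ≠ u ∧ v ∈ F.overlap u.right

/-- `F.AcwAdj u v` : the arc `v` is anticlockwise adjacent to the arc `u`,
i.e. `v ≠ u` and `v ∈ O(l(u))`. -/
def AcwAdj (F : ArcFamily) (u v : CArc) : Prop :=
  v ≠ u ∧ v ∈ F.overlap u.left

end ArcFamily

/-- `G` has a complete minor on `m` vertices: there are `m` pairwise disjoint connected
branch sets with an edge of `G` between any two of them. -/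
def HasKMinor {V : Type*} (G : SimpleGraph V) (m : ℕ) : Prop :=
  ∃ B : Fin m → Set V,
    (∀ i, (G.induce (B i)).Connected) ∧
    (Pairwise fun i j => Disjoint (B i) (B j)) ∧
    (Pairwise fun i j => ∃ u ∈ B i, ∃ v ∈ B j, G.Adj u v)

/-- A graph is a proper circular arc graph if it is isomorphic to the circular arc graph
of some proper family of arcs. -/
def IsProperCircularArcGraph {V : Type*} (G : SimpleGraph V) : Prop :=
  ∃ F : ArcFamily, F.IsProper ∧ Nonempty (G ≃g F.graph)

/-- The clockwise angular distance from `p` to `q`: the unique `t ∈ [0,1)`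
with `q = p + t`.  Points are "encountered" in clockwise order of this quantity
when traversing clockwise from `p`. -/
noncomputable def angFrom (p q : AddCircle (1:ℝ)) : ℝ :=
  ((AddCircle.equivIco (1:ℝ) 0) (q - p) : ℝ)

/-!
Choose a point `p` lying on exactly `r_inf` arcs. Order the arcs so that those through `p`
come first, followed by the others in the clockwise order of their left endpoints as seen from
`p`, and colour greedily. Cutting the circle at `p` turns the arcs avoiding `p` into intervals,
so an earlier neighbour of an arc `v` either passes through `p` or contains the left endpoint
of `v`. Hence `v` has fewer than `r_inf + r_sup` earlier neighbours.
-/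

open Finset

namespace SimpleGraph

variable {V α : Type*} [Fintype V] [LinearOrder α] {G : SimpleGraph V} {k : ℕ}

theorem colorable_of_card_earlier_adj_lt (f : V → α) (hf : ∀ u v, G.Adj u v → f u ≠ f v)
    (h : ∀ v, #{u | G.Adj u v ∧ f u < f v} < k) : G.Colorable k := by
  suffices ∀ s : Finset V, ∃ C : V → ℕ,
      (∀ v ∈ s, C v < k) ∧ ∀ u ∈ s, ∀ v ∈ s, G.Adj u v → C u ≠ C v by
    obtain ⟨C, hlt, hC⟩ := this univ
    exact (colorable_iff_exists_bdd_nat_coloring k).2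
      ⟨Coloring.mk C fun huv => hC _ (mem_univ _) _ (mem_univ _) huv, fun v => hlt v (mem_univ v)⟩
  intro s
  induction s using Finset.induction_on_max_value f with
  | empty => exact ⟨0, by simp, by simp⟩
  | insert a s _ hmax ih =>
    obtain ⟨C, hlt, hC⟩ := ih
    have hsub : {u ∈ s | G.Adj u a} ⊆ ({u | G.Adj u a ∧ f u < f a} : Finset V) := by
      intro u hu
      simp only [mem_filter, mem_univ, true_and] at hu ⊢
      exact ⟨hu.2, (hmax u hu.1).lt_of_ne (hf u a hu.2)⟩
    have hcard : #(image C {u ∈ s | G.Adj u a}) < #(range k) := by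
      rw [card_range]
      exact (card_image_le.trans (card_le_card hsub)).trans_lt (h a)
    obtain ⟨c, hck, hc⟩ := exists_mem_notMem_of_card_lt_card hcard
    have hca : ∀ u ∈ s, G.Adj u a → C u ≠ c := fun u hu hua hCu =>
      hc (mem_image.2 ⟨u, mem_filter.2 ⟨hu, hua⟩, hCu⟩)
    refine ⟨Function.update C a c, ?_, ?_⟩
    · intro v hv
      rcases eq_or_ne v a with rfl | hva
      · simpa using hck
      · simpa [hva] using hlt v ((mem_insert.1 hv).resolve_left hva)
    · intro u hu v hv huv
      simp only [Function.update_apply]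
      split_ifs with hua hva hva
      · exact absurd huv (hua ▸ hva ▸ G.irrefl)
      · subst hua
        exact (hca v ((mem_insert.1 hv).resolve_left hva) huv.symm).symm
      · subst hva
        exact hca u ((mem_insert.1 hu).resolve_left hua) huv
      · exact hC u ((mem_insert.1 hu).resolve_left hua) v ((mem_insert.1 hv).resolve_left hva) huv

end SimpleGraph

section AngFrom

variable (p : AddCircle (1:ℝ))

theorem angFrom_mem_Ico (q : AddCircle (1:ℝ)) : angFrom p q ∈ Set.Ico 0 1 := by
  simpa [angFrom] using (AddCircle.equivIco 1 0 (q - p)).2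

theorem add_angFrom (q : AddCircle (1:ℝ)) : p + (angFrom p q : AddCircle (1:ℝ)) = q := by
  simp [angFrom]

theorem angFrom_add_coe (x : ℝ) : angFrom p (p + x) = Int.fract x := by
  simp [angFrom]

theorem add_coe_eq_add_angFrom_add (q : AddCircle (1:ℝ)) (t : ℝ) :
    q + (t : AddCircle (1:ℝ)) = p + ((angFrom p q + t : ℝ) : AddCircle (1:ℝ)) := by
  rw [AddCircle.coe_add, ← add_assoc, add_angFrom]

theorem angFrom_injective : Function.Injective (angFrom p) := fun q q' h => by
  rw [← add_angFrom p q, h, add_angFrom]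

end AngFrom

namespace CArc

theorem left_mem_pts (a : CArc) : a.left ∈ a.pts :=
  ⟨0, le_rfl, a.len_pos.le, by simp⟩

theorem angFrom_left_add_len_lt {a : CArc} {p : AddCircle (1:ℝ)} (hp : p ∉ a.pts) :
    angFrom p a.left + a.len < 1 := by
  by_contra! h
  have hL := angFrom_mem_Ico p a.left
  refine hp ⟨1 - angFrom p a.left, by linarith [hL.2], by linarith, ?_⟩
  rw [add_coe_eq_add_angFrom_add p, add_sub_cancel, AddCircle.coe_period, add_zero]

theorem mem_pts_iff_of_notMem {a : CArc} {p : AddCircle (1:ℝ)} (hp : p ∉ a.pts)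
    {q : AddCircle (1:ℝ)} :
    q ∈ a.pts ↔ angFrom p a.left ≤ angFrom p q ∧ angFrom p q ≤ angFrom p a.left + a.len := by
  have hlen := angFrom_left_add_len_lt hp
  have hL := angFrom_mem_Ico p a.left
  constructor
  · rintro ⟨t, ht0, htl, rfl⟩
    rw [add_coe_eq_add_angFrom_add p, angFrom_add_coe,
      Int.fract_eq_self.2 ⟨by linarith [hL.1], by linarith⟩]
    constructor <;> linarith
  · rintro ⟨h1, h2⟩
    refine ⟨angFrom p q - angFrom p a.left, by linarith, by linarith, ?_⟩
    rw [add_coe_eq_add_angFrom_add p, add_sub_cancel, add_angFrom]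

theorem left_mem_pts_of_inter_nonempty {a b : CArc} {p : AddCircle (1:ℝ)} (ha : p ∉ a.pts)
    (hb : p ∉ b.pts) (hab : angFrom p a.left < angFrom p b.left)
    (h : (a.pts ∩ b.pts).Nonempty) : b.left ∈ a.pts := by
  obtain ⟨q, hqa, hqb⟩ := h
  rw [mem_pts_iff_of_notMem ha] at hqa ⊢
  rw [mem_pts_iff_of_notMem hb] at hqb
  constructor <;> linarith

end CArc

/-- Arcs through `p` (key `false`) come first, then the others by the position of their left
endpoint clockwise from `p`. -/
noncomputable def cutKey (p : AddCircle (1:ℝ)) (a : CArc) : Bool ×ₗ ℝ :=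
  toLex (decide (p ∉ a.pts), angFrom p a.left)

namespace ArcFamily

variable (F : ArcFamily)

theorem card_overlap_le_rsup (q : AddCircle (1:ℝ)) : #(F.overlap q) ≤ F.rsup := by
  refine le_csSup ⟨#F.arcs, ?_⟩ ⟨q, rfl⟩
  rintro n ⟨r, rfl⟩
  exact card_filter_le _ _

theorem exists_card_overlap_eq_rinf : ∃ p, #(F.overlap p) = F.rinf :=
  Nat.sInf_mem (s := {n | ∃ p, #(F.overlap p) = n}) ⟨_, 0, rfl⟩

theorem left_injOn : Set.InjOn CArc.left F.arcs := fun a ha b hb h => by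
  by_contra hab
  exact (F.endpoints_distinct a ha b hb hab).1 h

theorem mem_overlap_union_of_cutKey_lt {p : AddCircle (1:ℝ)} {u v : CArc} (hu : u ∈ F.arcs)
    (huv : u ≠ v) (h : (u.pts ∩ v.pts).Nonempty) (hlt : cutKey p u < cutKey p v) :
    u ∈ F.overlap p ∪ (F.overlap v.left).erase v := by
  by_cases hpu : p ∈ u.pts
  · exact mem_union_left _ (mem_filter.2 ⟨hu, hpu⟩)
  have ⟨hpv, hlt⟩ : p ∉ v.pts ∧ angFrom p u.left < angFrom p v.left := by
    simpa [cutKey, Prod.Lex.toLex_lt_toLex, Bool.lt_iff, hpu] using hlt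
  exact mem_union_right _ (mem_erase.2 ⟨huv, mem_filter.2 ⟨hu,
    CArc.left_mem_pts_of_inter_nonempty hpu hpv hlt h⟩⟩)

theorem card_earlier_adj_lt (p : AddCircle (1:ℝ)) (v : {a // a ∈ F.arcs}) :
    #{u | F.graph.Adj u v ∧ cutKey p u.1 < cutKey p v.1} < #(F.overlap p) + F.rsup := by
  calc #{u | F.graph.Adj u v ∧ cutKey p u.1 < cutKey p v.1}
      ≤ #(F.overlap p ∪ (F.overlap v.1.left).erase v.1) := by
        refine card_le_card_of_injOn Subtype.val (fun u hu => ?_) Subtype.val_injective.injOn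
        obtain ⟨⟨huv, hmeet⟩, hlt⟩ := (mem_filter.1 hu).2
        exact F.mem_overlap_union_of_cutKey_lt u.2 (Subtype.coe_injective.ne huv) hmeet hlt
    _ ≤ #(F.overlap p) + #((F.overlap v.1.left).erase v.1) := card_union_le _ _
    _ < #(F.overlap p) + F.rsup := by
        gcongr
        exact (card_erase_lt_of_mem (mem_filter.2 ⟨v.2, v.1.left_mem_pts⟩)).trans_le
          (F.card_overlap_le_rsup _)

end ArcFamily

/-- For any family `F` of arcs, `χ(F) ≤ r_sup + r_inf`. -/
theorem chromatic_le_rsup_add_rinf (F : ArcFamily) :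
    F.graph.chromaticNumber ≤ ((F.rsup + F.rinf : ℕ) : ℕ∞) := by
  obtain ⟨p, hp⟩ := F.exists_card_overlap_eq_rinf
  refine (colorable_of_card_earlier_adj_lt (fun v => cutKey p v.1) (fun u v huv hkey => ?_)
    fun v => ?_).chromaticNumber_le
  · have hleft := F.left_injOn.ne u.2 v.2 (Subtype.coe_injective.ne huv.1)
    exact (angFrom_injective p).ne hleft (congrArg (fun x => (ofLex x).2) hkey)
  · simpa [hp, add_comm] using F.card_earlier_adj_lt p v
end

section
/- Let 𝒢 be a proper circular arc graph on the minimum possible number n of vertices that is a counterexample to Hadwiger's conjecture, with a fixed proper circular arc representation; let O be a maximum overlap set of the representation, r = |O| and x = χ(𝒢) − r. Then the minimum degree of 𝒢 satisfies δ(𝒢) ≥ r + x − 1. -/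
/-! If some arc `v` had fewer than `χ(𝒢) - 1` neighbours, every `(χ(𝒢) - 1)`-colouring of
`𝒢 - v` would extend greedily to `𝒢`. So `𝒢 - v`, again a proper circular arc graph, has
chromatic number `χ(𝒢)`; by minimality it has a `K_χ(𝒢)` minor, and so does `𝒢 ⊇ 𝒢 - v`. -/

open SimpleGraph
open scoped Classical

/-- A minimum counterexample to Hadwiger's conjecture among proper circular arc graphs:
a proper family of arcs whose circular arc graph `𝒢` has no complete minor on `χ(𝒢)`
vertices, while every proper circular arc graph on fewer vertices than `𝒢` has a
complete minor on its own chromatic number of vertices. -/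
structure MinCounterexample where
  F : ArcFamily
  proper : F.IsProper
  no_clique_minor : ∀ m : ℕ, F.graph.chromaticNumber = m → ¬ HasKMinor F.graph m
  minimal : ∀ (V : Type) [inst : Fintype V] (G : SimpleGraph V),
    IsProperCircularArcGraph G → Fintype.card V < F.arcs.card →
    ∀ m : ℕ, G.chromaticNumber = m → HasKMinor G m

namespace HasKMinor

variable {V W : Type*} {G : SimpleGraph V} {H : SimpleGraph W} {m : ℕ}

theorem of_embedding (f : G ↪g H) (hG : HasKMinor G m) : HasKMinor H m := by
  obtain ⟨B, hconn, hdisj, hadj⟩ := hG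
  refine ⟨fun i => f '' B i, fun i => ?_, fun i j hij => ?_, fun i j hij => ?_⟩
  · exact (hconn i).map (induceHom f.toHom (Set.mapsTo_image f (B i)))
      (Set.surjective_mapsTo_image_restrict f (B i))
  · exact (Set.disjoint_image_iff f.injective).mpr (hdisj hij)
  · obtain ⟨u, hu, w, hw, huw⟩ := hadj hij
    exact ⟨f u, Set.mem_image_of_mem f hu, f w, Set.mem_image_of_mem f hw,
      f.map_adj_iff.mpr huw⟩

end HasKMinor

namespace SimpleGraph

variable {V : Type*} {G : SimpleGraph V} {v : V} [Fintype (G.neighborSet v)] {k : ℕ}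

theorem Colorable.of_induce_compl_singleton (h : (G.induce {v}ᶜ).Colorable k)
    (hdeg : G.degree v < k) : G.Colorable k := by
  obtain ⟨c⟩ := h
  let used : Finset (Fin k) :=
    ((G.neighborFinset v).subtype (· ∈ ({v}ᶜ : Set V))).image c
  have hused : used.card < Fintype.card (Fin k) :=
    calc used.card ≤ ((G.neighborFinset v).subtype (· ∈ ({v}ᶜ : Set V))).card :=
          Finset.card_image_le
      _ ≤ (G.neighborFinset v).card := by
          rw [Finset.card_subtype]; exact Finset.card_filter_le _ _
      _ < Fintype.card (Fin k) := by rwa [card_neighborFinset_eq_degree, Fintype.card_fin]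
  obtain ⟨c₀, -, hc₀⟩ := Finset.exists_mem_notMem_of_card_lt_card
    (s := used) (t := Finset.univ) (by rwa [Finset.card_univ])
  have hneighbor : ∀ u (hu : u ∈ ({v}ᶜ : Set V)), G.Adj v u → c ⟨u, hu⟩ ≠ c₀ := by
    intro u hu huv h
    exact hc₀ (Finset.mem_image.mpr ⟨⟨u, hu⟩, by simpa using huv, h⟩)
  refine ⟨Coloring.mk (fun u => if hu : u = v then c₀ else c ⟨u, hu⟩) fun {a b} hab => ?_⟩
  by_cases ha : a = v <;> by_cases hb : b = v
  · exact absurd (ha.trans hb.symm) hab.ne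
  · subst ha; simpa [hb] using (hneighbor b hb hab).symm
  · subst hb; simpa [ha] using hneighbor a ha hab.symm
  · simpa [ha, hb] using c.valid (show (G.induce {v}ᶜ).Adj ⟨a, ha⟩ ⟨b, hb⟩ from hab)

theorem chromaticNumber_induce_compl_singleton {n : ℕ} (hχ : G.chromaticNumber = n)
    (hdeg : G.degree v + 1 < n) : (G.induce {v}ᶜ).chromaticNumber = n := by
  refine le_antisymm ?_ (le_chromaticNumber_iff_colorable.mpr fun m hm => ?_)
  · exact hχ ▸ chromaticNumber_mono_of_hom (Embedding.induce _).toHom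
  · have hG : G.Colorable (max m (G.degree v + 1)) :=
      (hm.mono (le_max_left _ _)).of_induce_compl_singleton
        (Nat.lt_of_succ_le (le_max_right _ _))
    have := hχ ▸ hG.chromaticNumber_le
    norm_cast at this
    omega

end SimpleGraph

namespace ArcFamily

noncomputable def erase (F : ArcFamily) (a : CArc) : ArcFamily where
  arcs := F.arcs.erase a
  endpoints_distinct b hb c hc :=
    F.endpoints_distinct b (Finset.mem_of_mem_erase hb) c (Finset.mem_of_mem_erase hc)

variable {F : ArcFamily}

theorem IsProper.erase (hF : F.IsProper) (a : CArc) : (F.erase a).IsProper :=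
  fun b hb c hc => hF b (Finset.mem_of_mem_erase hb) c (Finset.mem_of_mem_erase hc)

def graphEraseIso (v : {a // a ∈ F.arcs}) : (F.erase v.1).graph ≃g F.graph.induce {v}ᶜ where
  toFun a := ⟨⟨a.1, Finset.mem_of_mem_erase a.2⟩,
    fun h => Finset.ne_of_mem_erase a.2 (congrArg Subtype.val h)⟩
  invFun u := ⟨u.1.1, Finset.mem_erase.mpr ⟨fun h => u.2 (Subtype.ext h), u.1.2⟩⟩
  left_inv _ := rfl
  right_inv _ := rfl
  map_rel_iff' {a b} := by
    simp only [Equiv.coe_fn_mk, comap_adj, Function.Embedding.coe_subtype]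
    exact and_congr_left' (not_congr (Subtype.mk_eq_mk.trans Subtype.ext_iff.symm))

theorem isProperCircularArcGraph_induce_compl_singleton (hF : F.IsProper)
    (v : {a // a ∈ F.arcs}) : IsProperCircularArcGraph (F.graph.induce {v}ᶜ) :=
  ⟨F.erase v.1, hF.erase v.1, ⟨(graphEraseIso v).symm⟩⟩

end ArcFamily

theorem min_counterexample_min_degree_general (C : MinCounterexample)
    (r x : ℕ)
    (hx : C.F.graph.chromaticNumber = ((r + x : ℕ) : ℕ∞)) :
    ∀ v : {a : CArc // a ∈ C.F.arcs}, r + x - 1 ≤ (C.F.graph.neighborSet v).ncard := by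
  intro v
  by_contra! hlow
  have hdeg : C.F.graph.degree v + 1 < r + x := by
    have : (C.F.graph.neighborSet v).ncard = C.F.graph.degree v := by
      rw [← card_neighborSet_eq_degree, Set.ncard_eq_toFinset_card', Set.toFinset_card]
    omega
  have hcard : Fintype.card ({v}ᶜ : Set {a // a ∈ C.F.arcs}) < C.F.arcs.card := by
    simp only [Fintype.card_compl_set, Fintype.card_coe]
    exact Nat.sub_lt (Finset.card_pos.mpr ⟨v.1, v.2⟩) one_pos
  have hminor := C.minimal _ _
    (ArcFamily.isProperCircularArcGraph_induce_compl_singleton C.proper v) hcard _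
    (chromaticNumber_induce_compl_singleton hx hdeg)
  exact C.no_clique_minor _ hx (hminor.of_embedding (Embedding.induce _))

/-- For the minimum counterexample `𝒢`, with `O` a maximum overlap set,
`r = |O|` and `x = χ(𝒢) − r`, the minimum degree satisfies `δ(𝒢) ≥ r + x − 1`. -/
theorem min_counterexample_min_degree (C : MinCounterexample)
    (p₀ : AddCircle (1:ℝ)) (hmax : (C.F.overlap p₀).card = C.F.rsup)
    (r x : ℕ) (hr : (C.F.overlap p₀).card = r)
    (hx : C.F.graph.chromaticNumber = ((r + x : ℕ) : ℕ∞)) :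
    ∀ v : {a : CArc // a ∈ C.F.arcs}, r + x - 1 ≤ (C.F.graph.neighborSet v).ncard :=
  min_counterexample_min_degree_general C r x hx
end
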